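/- Let K be a field, let μ ≥ 1, and let q ∈ K^× satisfy q^m ≠ 1 for all 1 ≤ m ≤ μ (q is not a root of unity of order ≤ μ). Let C = {f ∈ K(x) : φ_q(f) = f} be the fixed field of φ_q acting on K(x). Then for all u_0, …, u_{μ−1} ∈ K(x), the dimension over C of the C-linear span of u_0, …, u_{μ−1} equals the rank over K(x) of the μ×μ Casorati matrix whose (j,i) entry is φ_q^j(u_i), 0 ≤ i, j ≤ μ−1. -/

import Mathlib

/-!
For a field endomorphism `σ` of `L` with fixed field `C`, the columns of the Casorati matrix
are the images of the `u i` under the `C`-linear map `Φ x = (σ^[j] x)_{j < μ}`, so its rank is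
the dimension of the `L`-span of `Φ (span_C u)`. This is computed from a `C`-basis of
`span_C u`, whose image under `Φ` is `L`-linearly independent: a minimal `L`-relation,
normalised to have a coefficient `1`, minus its image under `σ` is a shorter relation, so all
its coefficients are fixed by `σ`, i.e. lie in `C`.
-/

noncomputable section

variable {K : Type*} [Field K]

/-- Substitution `x ↦ qx` on polynomials, as an algebra homomorphism. -/
def polySubst (q : K) : Polynomial K →ₐ[K] Polynomial K :=
  Polynomial.aeval (Polynomial.C q * Polynomial.X)

theorem polySubst_leftInverse (q : K) (hq : q ≠ 0) (P : Polynomial K) :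
    polySubst q⁻¹ (polySubst q P) = P := by
  have h1 : (polySubst (K := K) q⁻¹) (Polynomial.C q * Polynomial.X) = Polynomial.X := by
    simp only [polySubst, map_mul, Polynomial.aeval_C, Polynomial.aeval_X,
      Polynomial.algebraMap_eq]
    rw [← mul_assoc, ← Polynomial.C_mul, mul_inv_cancel₀ hq, Polynomial.C_1, one_mul]
  calc polySubst q⁻¹ (polySubst q P)
      = Polynomial.aeval ((polySubst q⁻¹) (Polynomial.C q * Polynomial.X)) P :=
        (Polynomial.aeval_algHom_apply _ _ _).symm
    _ = P := by rw [h1]; exact Polynomial.aeval_X_left_apply P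

theorem polySubst_injective (q : K) (hq : q ≠ 0) : Function.Injective (polySubst q) :=
  Function.LeftInverse.injective (g := polySubst q⁻¹) (polySubst_leftInverse q hq)

/-- The automorphism `φ_q : f(x) ↦ f(qx)` of the field `K(x)` of rational functions,
as a ring homomorphism (for `q ≠ 0`). -/
def substField (q : K) (hq : q ≠ 0) : RatFunc K →+* RatFunc K :=
  IsFractionRing.lift (g := (algebraMap (Polynomial K) (RatFunc K)).comp (polySubst q).toRingHom)
    ((IsFractionRing.injective (Polynomial K) (RatFunc K)).comp (polySubst_injective q hq))

/-- The subfield of elements fixed by a ring endomorphism of `K(x)`;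
for `σ = φ_q` this is the field of constants `C`. -/
def fixedSubfield (σ : RatFunc K →+* RatFunc K) : Subfield (RatFunc K) where
  carrier := {f | σ f = f}
  mul_mem' := by
    intro a b ha hb
    simp only [Set.mem_setOf_eq, map_mul] at *
    rw [ha, hb]
  one_mem' := map_one σ
  add_mem' := by
    intro a b ha hb
    simp only [Set.mem_setOf_eq, map_add] at *
    rw [ha, hb]
  zero_mem' := map_zero σ
  neg_mem' := by
    intro a ha
    simp only [Set.mem_setOf_eq, map_neg] at *
    rw [ha]
  inv_mem' := by
    intro a ha
    simp only [Set.mem_setOf_eq, map_inv₀] at *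
    rw [ha]

namespace Casorati

variable {L : Type*} [Field L] (σ : L →+* L) (C : Subfield L)

def linearMapOfFixed (hCσ : ∀ x ∈ C, σ x = x) : L →ₗ[C] L where
  toFun := σ
  map_add' := map_add σ
  map_smul' c x := by
    change σ (c * x) = c * σ x
    rw [map_mul, hCσ c c.2]

def casoratiMap (hCσ : ∀ x ∈ C, σ x = x) (m : ℕ) : L →ₗ[C] (Fin m → L) :=
  LinearMap.pi fun j : Fin m => linearMapOfFixed σ C hCσ ^ (j : ℕ)

theorem casoratiMap_apply (hCσ : ∀ x ∈ C, σ x = x) (m : ℕ) (x : L) (j : Fin m) :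
    casoratiMap σ C hCσ m x j = σ^[j] x :=
  Module.End.pow_apply _ _ _

/-- Induction on `m`: subtracting `σ` of the normalised relation (`g i₀ = 1`) from its shift
gives a relation among the `σ (w i)`, `i ≠ i₀`, with `m - 1` rows. -/
theorem eq_zero_of_forall_sum_iterate_eq_zero (hC : ∀ x, x ∈ C ↔ σ x = x) (m : ℕ)
    {ι : Type*} {w : ι → L} (hw : LinearIndependent C w) {s : Finset ι} (hs : s.card ≤ m)
    {g : ι → L} (hg : ∀ j < m, ∑ i ∈ s, g i * σ^[j] (w i) = 0) : ∀ i ∈ s, g i = 0 := by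
  classical
  induction m generalizing w s g with
  | zero =>
    intro i hi
    simp [Finset.card_eq_zero.mp (Nat.le_zero.mp hs)] at hi
  | succ m ih =>
    by_contra! ⟨i₀, hi₀, hg₀⟩
    set f : ι → L := fun i => g i / g i₀
    have hf₀ : f i₀ = 1 := div_self hg₀
    have hf : ∀ j < m + 1, ∑ i ∈ s, f i * σ^[j] (w i) = 0 := fun j hj => by
      simp_rw [f, div_mul_eq_mul_div, ← Finset.sum_div, hg j hj, zero_div]
    have hσw : LinearIndependent C (σ ∘ w) :=
      hw.map' (linearMapOfFixed σ C fun x => (hC x).1) (LinearMap.ker_eq_bot.2 σ.injective)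
    have hshift : ∀ j < m, ∑ i ∈ s.erase i₀, (f i - σ (f i)) * σ^[j] (σ (w i)) = 0 := by
      intro j hj
      rw [Finset.sum_erase s (by simp [hf₀])]
      calc ∑ i ∈ s, (f i - σ (f i)) * σ^[j] (σ (w i))
          = ∑ i ∈ s, f i * σ^[j + 1] (w i) - σ (∑ i ∈ s, f i * σ^[j] (w i)) := by
            simp only [sub_mul, Finset.sum_sub_distrib, map_sum, map_mul,
              ← Function.iterate_succ_apply, ← Function.iterate_succ_apply' σ]
        _ = 0 := by rw [hf (j + 1) (by omega), hf j (by omega), map_zero, sub_zero]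
    have hfC : ∀ i ∈ s, f i ∈ C := by
      intro i hi
      rw [hC]
      by_cases h : i = i₀
      · rw [h, hf₀, map_one]
      · have := ih hσw (by rw [Finset.card_erase_of_mem hi₀]; omega) hshift i
          (Finset.mem_erase.2 ⟨h, hi⟩)
        exact (sub_eq_zero.1 this).symm
    let c : ι → C := fun i => if h : f i ∈ C then ⟨f i, h⟩ else 0
    have hc : ∀ i ∈ s, (c i : L) = f i := fun i hi => by simp [c, hfC i hi]
    have hrel : ∑ i ∈ s, c i • w i = 0 := by
      rw [← hf 0 m.succ_pos]
      refine Finset.sum_congr rfl fun i hi => ?_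
      change (c i : L) * w i = _
      rw [hc i hi, Function.iterate_zero_apply]
    have := hc i₀ hi₀
    rw [linearIndependent_iff'.1 hw s c hrel i₀ hi₀, hf₀] at this
    simp at this

theorem linearIndependent_casoratiMap (hC : ∀ x, x ∈ C ↔ σ x = x) {ι : Type*} [Fintype ι]
    {w : ι → L} (hw : LinearIndependent C w) {m : ℕ} (hm : Fintype.card ι ≤ m) :
    LinearIndependent L (casoratiMap σ C (fun x => (hC x).1) m ∘ w) := by
  refine Fintype.linearIndependent_iff.2 fun g hg i =>
    eq_zero_of_forall_sum_iterate_eq_zero σ C hC m hw hm (fun j hj => ?_) i (Finset.mem_univ i)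
  simpa [casoratiMap_apply] using congrFun hg ⟨j, hj⟩

theorem span_casoratiMap_image_span (hCσ : ∀ x ∈ C, σ x = x) (m : ℕ) (s : Set L) :
    Submodule.span L (casoratiMap σ C hCσ m '' Submodule.span C s) =
      Submodule.span L (casoratiMap σ C hCσ m '' s) := by
  rw [← Submodule.map_coe, Submodule.map_span, Submodule.span_span_of_tower]

theorem finrank_span_eq_rank_casorati (hC : ∀ x, x ∈ C ↔ σ x = x) {ι : Type*} [Fintype ι]
    (u : ι → L) {m : ℕ} (hm : Fintype.card ι ≤ m) :
    Module.finrank C (Submodule.span C (Set.range u)) =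
      (Matrix.of fun (j : Fin m) (i : ι) => σ^[j] (u i)).rank := by
  obtain ⟨t, htu, hspan, hli⟩ := exists_linearIndependent C (Set.range u)
  have : Fintype t := ((Set.finite_range u).subset htu).fintype
  set Φ := casoratiMap σ C (fun x => (hC x).1) m
  have hrank : Module.finrank C (Submodule.span C (Set.range u)) = Fintype.card t := by
    rw [← hspan, ← finrank_span_eq_card hli, Subtype.range_coe]
  have hcols : Submodule.span L (Set.range (Φ ∘ Subtype.val : t → _)) =
      Submodule.span L (Set.range (Matrix.of fun (j : Fin m) (i : ι) => σ^[j] (u i)).col) := by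
    have hcol : (Matrix.of fun (j : Fin m) (i : ι) => σ^[j] (u i)).col = Φ ∘ u := by
      ext i j
      exact (casoratiMap_apply σ C _ m (u i) j).symm
    rw [hcol, Set.range_comp, Set.range_comp, Subtype.range_coe,
      ← span_casoratiMap_image_span, hspan, span_casoratiMap_image_span]
  have hcard : Fintype.card t ≤ m := hrank ▸ (finrank_range_le_card u).trans hm
  rw [hrank, Matrix.rank_eq_finrank_span_cols, ← hcols,
    finrank_span_eq_card (linearIndependent_casoratiMap σ C hC hli hcard)]

end Casorati

theorem q_wronskian_lemma_general (μ : ℕ) (q : K) (hq0 : q ≠ 0)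
    (u : Fin μ → RatFunc K) :
    Module.finrank (fixedSubfield (substField q hq0))
        (Submodule.span (fixedSubfield (substField q hq0)) (Set.range u)) =
      (Matrix.of fun j i : Fin μ => (fun f => substField q hq0 f)^[(j : ℕ)] (u i)).rank :=
  Casorati.finrank_span_eq_rank_casorati (substField q hq0) _ (fun _ => Iff.rfl) u
    (Fintype.card_fin μ).le

set_option synthInstance.maxHeartbeats 1000000 in
/-- The q-analogue of the Wronskian lemma: the dimension over the field of constants `C`
of the `C`-span of `u_0, …, u_{μ-1}` equals the rank of the Casorati matrix. -/
theorem q_wronskian_lemma (μ : ℕ) (hμ : 1 ≤ μ) (q : K) (hq0 : q ≠ 0)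
    (hqru : ∀ m : ℕ, 1 ≤ m → m ≤ μ → q ^ m ≠ 1)
    (u : Fin μ → RatFunc K) :
    Module.finrank (fixedSubfield (substField q hq0))
        (Submodule.span (fixedSubfield (substField q hq0)) (Set.range u)) =
      (Matrix.of fun j i : Fin μ => (fun f => substField q hq0 f)^[(j : ℕ)] (u i)).rank :=
  q_wronskian_lemma_general μ q hq0 u
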